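/- arXiv:math/0507062 — 4 statements merged into one kernel-verified Lean document; each statement's English description precedes it below -/
import Mathlib

section
/- Let X = lim (X_s, p^t_s, Σ) and Y = lim (Y_s, q^t_s, Σ) with projections p_s : X → X_s, q_s : Y → Y_s, where both inverse systems are σ-complete and all X_s, Y_s are compact metrizable, and let f : X → Y be a continuous map. Then there exist a σ-closed cofinal subset T ⊆ Σ and continuous maps f_t : X_t → Y_t (t ∈ T) such that q_t ∘ f = f_t ∘ p_t for every t ∈ T. Moreover, if f is an open map then T and the maps f_t can be chosen so that each f_t is open. -/
/-! For `v ∈ Σ` the coordinate `x ↦ (f x)_v` is continuous on the compact space `X`; compactness of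
the set of pairs whose images are `1/n` apart shows that it factors through `p_w` for all large `w`.
If `f` is open, the same compactness argument, applied to the open σ-compact sets `f(p_v⁻¹ U)` with
`U` in a countable base of `X_v`, shows that for all large `w` each of them is a union of fibres of
`q_w`. Meeting both demands along a chain `s ≤ w₁ ≤ w₂ ≤ ⋯` and passing to its supremum `t` gives
an index where both hold with `v = w = t`: injectivity of `X_t → Π X_{w_n}` (σ-completeness) is what
lets them pass to suprema, and it also makes the set of such `t` σ-closed. Then `f_t` is the map
induced on the quotient `X_t` of `X`, and `f_t(U) = q_t(f(p_t⁻¹ U))` is open because `f(p_t⁻¹ U)`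
is open and `q_t`-saturated. -/

open Set Filter Topology

/-- An inverse system over a directed partially ordered set `ι`:
compact Hausdorff spaces `X s` and continuous surjective bonding maps
`r h : X t → X s` for `h : s ≤ t`, with the identity and composition laws. -/
structure IsInvSys {ι : Type*} [PartialOrder ι] {X : ι → Type*}
    [∀ s, TopologicalSpace (X s)]
    (r : ∀ ⦃s t : ι⦄, s ≤ t → X t → X s) : Prop where
  directed : ∀ a b : ι, ∃ c, a ≤ c ∧ b ≤ c
  continuous : ∀ ⦃s t : ι⦄ (h : s ≤ t), Continuous (r h)
  surjective : ∀ ⦃s t : ι⦄ (h : s ≤ t), Function.Surjective (r h)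
  map_id : ∀ (s : ι) (x : X s), r (le_refl s) x = x
  map_comp : ∀ ⦃s t u : ι⦄ (h₁ : s ≤ t) (h₂ : t ≤ u) (x : X u),
    r h₁ (r h₂ x) = r (h₁.trans h₂) x

/-- The limit of an inverse system: the space of threads, a subspace of the
product `Π s, X s`.  The projection onto the `s`-th coordinate is `x ↦ x.1 s`. -/
abbrev InvLim {ι : Type*} [PartialOrder ι] {X : ι → Type*}
    [∀ s, TopologicalSpace (X s)]
    (r : ∀ ⦃s t : ι⦄, s ≤ t → X t → X s) : Type _ :=
  {x : ∀ s, X s // ∀ ⦃s t : ι⦄ (h : s ≤ t), r h (x t) = x s}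

/-- σ-completeness of an inverse system. -/
def SigmaComplete {ι : Type*} [PartialOrder ι] {X : ι → Type*}
    [∀ s, TopologicalSpace (X s)]
    (r : ∀ ⦃s t : ι⦄, s ≤ t → X t → X s) : Prop :=
  ∀ T : Set ι, T.Nonempty → T.Countable → DirectedOn (· ≤ ·) T →
    ∃ t : ι, ∃ hlub : IsLUB T t, ∀ x y : X t,
      (∀ s (hs : s ∈ T), r (hlub.1 hs) x = r (hlub.1 hs) y) → x = y

/-- A subset `T` of a σ-complete directed poset is σ-closed if the least upper
bound of every nonempty countable directed subset of `T` belongs to `T`. -/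
def SigmaClosedIn {ι : Type*} [PartialOrder ι] (T : Set ι) : Prop :=
  ∀ M : Set ι, M ⊆ T → M.Nonempty → M.Countable → DirectedOn (· ≤ ·) M →
    ∀ t : ι, IsLUB M t → t ∈ T

theorem exists_forall_ne_of_directed {κ A : Type*} {B : κ → Type*} [Nonempty κ]
    [TopologicalSpace A] [∀ i, TopologicalSpace (B i)] [∀ i, T2Space (B i)]
    {g : ∀ i, A → B i} (hg : ∀ i, Continuous (g i))
    (hdir : Directed (· ⊇ ·) fun i => {x : A × A | g i x.1 = g i x.2})
    (hsep : ∀ a b, (∀ i, g i a = g i b) → a = b) {S : Set (A × A)} (hS : IsCompact S)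
    (hSdiag : ∀ x ∈ S, x.1 ≠ x.2) : ∃ i, ∀ x ∈ S, g i x.1 ≠ g i x.2 := by
  obtain ⟨i, hi⟩ := hS.elim_directed_family_closed _
    (fun i => isClosed_eq ((hg i).comp continuous_fst) ((hg i).comp continuous_snd))
    (eq_empty_of_forall_notMem fun x ⟨hxS, hx⟩ => hSdiag x hxS (hsep _ _ (mem_iInter.1 hx)))
    hdir
  exact ⟨i, fun x hxS hx => (eq_empty_iff_forall_notMem.1 hi) x ⟨hxS, hx⟩⟩

theorem IsOpen.isSigmaCompact_preimage {A B : Type*} [TopologicalSpace A] [CompactSpace A]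
    [TopologicalSpace B] [TopologicalSpace.MetrizableSpace B] {g : A → B} (hg : Continuous g)
    {U : Set B} (hU : IsOpen U) : IsSigmaCompact (g ⁻¹' U) := by
  let := TopologicalSpace.metrizableSpaceMetric B
  obtain ⟨F, hF, -, hFU, -⟩ := hU.exists_iUnion_isClosed
  exact ⟨fun n => g ⁻¹' F n, fun n => ((hF n).preimage hg).isCompact,
    by rw [← preimage_iUnion, hFU]⟩

section InverseLimit

variable {ι : Type*} [PartialOrder ι] {X : ι → Type*} [∀ s, TopologicalSpace (X s)]
  {r : ∀ ⦃s t : ι⦄, s ≤ t → X t → X s}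

namespace InvLim

theorem proj_eq_of_le {x y : InvLim r} {s t : ι} (h : s ≤ t) (hxy : x.1 t = y.1 t) :
    x.1 s = y.1 s := by
  rw [← x.2 h, ← y.2 h, hxy]

theorem continuous_proj (t : ι) : Continuous fun x : InvLim r => x.1 t :=
  (continuous_apply t).comp continuous_subtype_val

variable (r) in
def proj (t : ι) : C(InvLim r, X t) := ⟨fun x => x.1 t, continuous_proj t⟩

def IsSaturatedAt (t : ι) (V : Set (InvLim r)) : Prop :=
  ∀ y ∈ V, ∀ z : InvLim r, z.1 t = y.1 t → z ∈ V

theorem IsSaturatedAt.mono {s t : ι} (h : s ≤ t) {V : Set (InvLim r)} (hV : IsSaturatedAt s V) :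
    IsSaturatedAt t V :=
  fun y hy z hz => hV y hy z (proj_eq_of_le h hz)

end InvLim

open InvLim

namespace IsInvSys

variable (hr : IsInvSys r)
include hr

theorem isDirected : IsDirected ι (· ≤ ·) := ⟨hr.directed⟩

section Countable

variable (hsc : SigmaComplete r)
include hsc

theorem bddAbove_of_countable [Nonempty ι] {S : Set ι} (hS : S.Countable) : BddAbove S := by
  obtain ⟨a, ha⟩ := countable_iff_exists_subset_range.1 hS
  choose ub hub using hr.directed
  let c : ℕ → ι := fun n => Nat.rec (a 0) (fun n v => ub v (a (n + 1))) n
  have hc : Monotone c := monotone_nat_of_le_succ fun n => (hub _ _).1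
  have hac : ∀ n, a n ≤ c n := by
    rintro (_ | n)
    exacts [le_rfl, (hub _ _).2]
  obtain ⟨t, ht, -⟩ := hsc (range c) (range_nonempty c) (countable_range c)
    hc.directed_le.directedOn_range
  refine ⟨t, fun s hs => ?_⟩
  obtain ⟨n, rfl⟩ := ha hs
  exact (hac n).trans (ht.1 ⟨n, rfl⟩)

theorem countableInterFilter_atTop [Nonempty ι] : CountableInterFilter (atTop : Filter ι) := by
  have := hr.isDirected
  refine ⟨fun S hS hmem => ?_⟩
  choose a ha using fun s (hs : s ∈ S) => mem_atTop_sets.1 (hmem s hs)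
  have : Countable S := hS.to_subtype
  obtain ⟨t, ht⟩ := hr.bddAbove_of_countable hsc (countable_range fun s : S => a s s.2)
  exact mem_atTop_sets.2 ⟨t, fun u hu s hs => ha s hs u ((ht ⟨⟨s, hs⟩, rfl⟩).trans hu)⟩
end Countable

variable [∀ s, T2Space (X s)]

theorem isClosed_setOf_compat {s t : ι} (h : s ≤ t) : IsClosed {x : ∀ s, X s | r h (x t) = x s} :=
  isClosed_eq ((hr.continuous h).comp (continuous_apply t)) (continuous_apply s)

theorem eventually_forall_proj_ne [Nonempty ι]
    {S : Set (InvLim r × InvLim r)} (hS : IsCompact S) (hSdiag : ∀ x ∈ S, x.1 ≠ x.2) :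
    ∀ᶠ t in atTop, ∀ x ∈ S, x.1.1 t ≠ x.2.1 t := by
  have hdir : Directed (· ⊇ ·) fun t => {x : InvLim r × InvLim r | x.1.1 t = x.2.1 t} := by
    intro s t
    obtain ⟨u, hsu, htu⟩ := hr.directed s t
    exact ⟨u, fun x hx => proj_eq_of_le hsu hx, fun x hx => proj_eq_of_le htu hx⟩
  obtain ⟨t₀, ht₀⟩ := exists_forall_ne_of_directed (g := fun t (x : InvLim r) => x.1 t)
    continuous_proj hdir (fun x y h => Subtype.ext (funext h)) hS hSdiag
  filter_upwards [eventually_ge_atTop t₀] with t ht x hx hxt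
  exact ht₀ x hx (proj_eq_of_le ht hxt)
variable [∀ s, CompactSpace (X s)]

theorem compactSpace : CompactSpace (InvLim r) := by
  have hthreads : {x : ∀ s, X s | ∀ ⦃s t : ι⦄ (h : s ≤ t), r h (x t) = x s} =
      ⋂ (s) (t) (h : s ≤ t), {x | r h (x t) = x s} := by
    ext; simp
  have hclosed : IsClosed {x : ∀ s, X s | ∀ ⦃s t : ι⦄ (h : s ≤ t), r h (x t) = x s} := by
    rw [hthreads]
    exact isClosed_iInter fun s => isClosed_iInter fun t => isClosed_iInter hr.isClosed_setOf_compat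
  exact isCompact_iff_compactSpace.mp hclosed.isCompact

theorem proj_surjective (t₀ : ι) : Function.Surjective fun x : InvLim r => x.1 t₀ := by
  classical
  intro a
  have : ∀ s, Nonempty (X s) := fun s => by
    obtain ⟨u, hsu, htu⟩ := hr.directed s t₀
    exact ⟨r hsu (hr.surjective htu a).choose⟩
  let K : ι → Set (∀ s, X s) := fun u =>
    {x | x t₀ = a} ∩ ⋂ (s) (t) (h : s ≤ t) (_ : t ≤ u), {x | r h (x t) = x s}
  have hK : ∀ u, IsClosed (K u) := fun u =>
    (isClosed_eq (continuous_apply t₀) continuous_const).inter <| isClosed_iInter fun s =>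
      isClosed_iInter fun t => isClosed_iInter fun h => isClosed_iInter fun _ =>
        hr.isClosed_setOf_compat h
  have hKne : ∀ u, (K u).Nonempty := by
    intro u
    obtain ⟨w, huw, htw⟩ := hr.directed u t₀
    obtain ⟨b, rfl⟩ := hr.surjective htw a
    refine ⟨fun s => if h : s ≤ w then r h b else Classical.arbitrary _, by simp [htw], ?_⟩
    simp only [mem_iInter, mem_ofPred_eq]
    intro s t hst htu
    simp [htu.trans huw, hst.trans (htu.trans huw), hr.map_comp]
  have hKdir : Directed (· ⊇ ·) K := fun u v => by
    obtain ⟨w, huw, hvw⟩ := hr.directed u v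
    refine ⟨w, ?_, ?_⟩ <;>
    · refine inter_subset_inter_right _ fun x hx => ?_
      simp only [mem_iInter] at hx ⊢
      exact fun s t h ht => hx s t h (ht.trans ‹_›)
  have : Nonempty ι := ⟨t₀⟩
  obtain ⟨x, hx⟩ := IsCompact.nonempty_iInter_of_directed_nonempty_isCompact_isClosed K hKdir
    hKne (fun u => (hK u).isCompact) hK
  simp only [mem_iInter, K, mem_inter_iff, mem_ofPred_eq] at hx
  exact ⟨⟨x, fun s t h => (hx t).2 s t h le_rfl⟩, (hx t₀).1⟩

theorem isQuotientMap_proj (t : ι) : IsQuotientMap (proj r t) :=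
  haveI := hr.compactSpace
  .of_surjective_continuous (hr.proj_surjective t) (continuous_proj t)

variable (hsc : SigmaComplete r)
include hsc

theorem eventually_factorsThrough_proj [Nonempty ι] {Z : Type*} [TopologicalSpace Z]
    [TopologicalSpace.MetrizableSpace Z] {g : InvLim r → Z} (hg : Continuous g) :
    ∀ᶠ t in atTop, Function.FactorsThrough g fun x : InvLim r => x.1 t := by
  let := TopologicalSpace.metrizableSpaceMetric Z
  have := hr.compactSpace
  have := hr.countableInterFilter_atTop hsc
  have hsep : ∀ n : ℕ, ∀ᶠ t in atTop, ∀ x ∈ {x : InvLim r × InvLim r |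
      1 / (n + 1 : ℝ) ≤ dist (g x.1) (g x.2)}, x.1.1 t ≠ x.2.1 t := fun n =>
    hr.eventually_forall_proj_ne
      (isClosed_le continuous_const
        ((hg.comp continuous_fst).dist (hg.comp continuous_snd))).isCompact
      fun x hx hx12 => by
        rw [mem_ofPred_eq, hx12, dist_self] at hx
        exact hx.not_gt (by positivity)
  filter_upwards [eventually_countable_forall.2 hsep] with t ht x y hxy
  refine eq_of_forall_dist_le fun ε hε => ?_
  obtain ⟨n, hn⟩ := exists_nat_one_div_lt hε
  by_contra! hlt
  exact ht n (x, y) (hn.trans hlt).le hxy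

theorem eventually_isSaturatedAt [Nonempty ι] {V : Set (InvLim r)} (hVo : IsOpen V)
    (hVσ : IsSigmaCompact V) :
    ∀ᶠ t in atTop, IsSaturatedAt t V := by
  have := hr.compactSpace
  have := hr.countableInterFilter_atTop hsc
  obtain ⟨K, hK, rfl⟩ := hVσ
  have hsep : ∀ n, ∀ᶠ t in atTop, ∀ x ∈ K n ×ˢ (⋃ n, K n)ᶜ, x.1.1 t ≠ x.2.1 t := fun n =>
    hr.eventually_forall_proj_ne ((hK n).prod hVo.isClosed_compl.isCompact)
      fun x hx hx12 => hx.2 (hx12 ▸ mem_iUnion_of_mem n hx.1)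
  filter_upwards [eventually_countable_forall.2 hsep] with t ht y hy z hz
  by_contra hzV
  obtain ⟨n, hn⟩ := mem_iUnion.1 hy
  exact ht n (y, z) ⟨hn, hzV⟩ hz.symm

theorem exists_preimage_subset_of_isLUB {M : Set ι} (hMne : M.Nonempty) (hMc : M.Countable)
    (hMdir : DirectedOn (· ≤ ·) M) {t : ι} (ht : IsLUB M t) {U : Set (X t)} (hU : IsOpen U)
    {a : X t} (ha : a ∈ U) :
    ∃ s, ∃ hs : s ∈ M, ∃ U' : Set (X s), IsOpen U' ∧ r (ht.1 hs) a ∈ U' ∧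
      r (ht.1 hs) ⁻¹' U' ⊆ U := by
  obtain ⟨t', ht', hinj⟩ := hsc M hMne hMc hMdir
  obtain rfl := ht'.unique ht
  have : Nonempty M := hMne.to_subtype
  have hdir : Directed (· ⊇ ·) fun s : M =>
      {x : X t' × X t' | r (ht'.1 s.2) x.1 = r (ht'.1 s.2) x.2} := by
    rintro ⟨s₁, hs₁⟩ ⟨s₂, hs₂⟩
    obtain ⟨s₃, hs₃, h₁₃, h₂₃⟩ := hMdir s₁ hs₁ s₂ hs₂
    refine ⟨⟨s₃, hs₃⟩, fun x hx => ?_, fun x hx => ?_⟩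
    · rw [mem_ofPred_eq, ← hr.map_comp h₁₃ (ht'.1 hs₃), ← hr.map_comp h₁₃ (ht'.1 hs₃), hx]
    · rw [mem_ofPred_eq, ← hr.map_comp h₂₃ (ht'.1 hs₃), ← hr.map_comp h₂₃ (ht'.1 hs₃), hx]
  obtain ⟨⟨s, hs⟩, hsep⟩ := exists_forall_ne_of_directed (g := fun s : M => r (ht'.1 s.2))
    (fun s => hr.continuous _) hdir (fun x y h => hinj x y fun s hs => h ⟨s, hs⟩)
    (isCompact_singleton.prod hU.isClosed_compl.isCompact)
    fun x hx hx12 => hx.2 (by rw [← hx12, mem_singleton_iff.1 hx.1]; exact ha)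
  refine ⟨s, hs, (r (ht'.1 hs) '' Uᶜ)ᶜ,
    (hU.isClosed_compl.isCompact.image (hr.continuous _)).isClosed.isOpen_compl, ?_, ?_⟩
  · rintro ⟨b, hb, hba⟩
    exact hsep (a, b) ⟨rfl, hb⟩ hba.symm
  · intro b hb
    by_contra hbU
    exact hb ⟨b, hbU, rfl⟩

end IsInvSys

end InverseLimit

section Descent

variable {ι : Type*} [PartialOrder ι] {X Y : ι → Type*}
  [∀ s, TopologicalSpace (X s)] [∀ s, TopologicalSpace (Y s)]
  {p : ∀ ⦃s t : ι⦄, s ≤ t → X t → X s} {q : ∀ ⦃s t : ι⦄, s ≤ t → Y t → Y s}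

open InvLim

def CoordFactorsThrough (f : InvLim p → InvLim q) (v w : ι) : Prop :=
  Function.FactorsThrough (fun x => (f x).1 v) fun x : InvLim p => x.1 w

def ImageSaturated (f : InvLim p → InvLim q) (v w : ι) : Prop :=
  ∀ U : Set (X v), IsOpen U → IsSaturatedAt w (f '' {x | x.1 v ∈ U})

def descentIndices (f : InvLim p → InvLim q) : Set ι :=
  {t | CoordFactorsThrough f t t ∧ (IsOpenMap f → ImageSaturated f t t)}

variable [∀ s, CompactSpace (X s)] [∀ s, T2Space (X s)] [∀ s, CompactSpace (Y s)]
  [∀ s, T2Space (Y s)] {f : InvLim p → InvLim q}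

theorem eventually_imageSaturated [∀ s, TopologicalSpace.MetrizableSpace (X s)] [Nonempty ι]
    (hpsys : IsInvSys p) (hqsys : IsInvSys q) (hqsc : SigmaComplete q) (hf : Continuous f)
    (hfo : IsOpenMap f) (v : ι) : ∀ᶠ w in atTop, ImageSaturated f v w := by
  let := TopologicalSpace.metrizableSpaceMetric (X v)
  have := hpsys.compactSpace
  have := hqsys.countableInterFilter_atTop hqsc
  obtain ⟨b, hbc, -, hb⟩ := TopologicalSpace.exists_countable_basis (X v)
  have hbasic : ∀ᶠ w in atTop, ∀ B ∈ b, IsSaturatedAt w (f '' {x : InvLim p | x.1 v ∈ B}) :=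
    (eventually_countable_ball hbc).2 fun B hB =>
      hqsys.eventually_isSaturatedAt hqsc (hfo _ ((hb.isOpen hB).preimage (continuous_proj v)))
        (((hb.isOpen hB).isSigmaCompact_preimage (continuous_proj v)).image hf)
  filter_upwards [hbasic] with w hw U hU
  rintro _ ⟨x, hx, rfl⟩ z hz
  obtain ⟨B, hB, hxB, hBU⟩ := hb.exists_subset_of_mem_open hx hU
  have hBU' : {x : InvLim p | x.1 v ∈ B} ⊆ {x | x.1 v ∈ U} := fun _ hx' => hBU hx'
  exact image_mono hBU' (hw B hB (f x) ⟨x, hxB, rfl⟩ z hz)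

section Closure

variable {M : Set ι} (hMne : M.Nonempty) (hMc : M.Countable) (hMdir : DirectedOn (· ≤ ·) M)
  {t : ι} (ht : IsLUB M t)
include hMne hMc hMdir ht

omit [∀ s, CompactSpace (X s)] [∀ s, T2Space (X s)] [∀ s, CompactSpace (Y s)]
  [∀ s, T2Space (Y s)] in
theorem coordFactorsThrough_of_isLUB (hqsc : SigmaComplete q)
    (h : ∀ s ∈ M, ∃ s' ∈ M, CoordFactorsThrough f s s') : CoordFactorsThrough f t t := by
  obtain ⟨t', ht', hinj⟩ := hqsc M hMne hMc hMdir
  obtain rfl := ht'.unique ht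
  intro x y hxy
  refine hinj _ _ fun s hs => ?_
  obtain ⟨s', hs', hss'⟩ := h s hs
  rw [(f x).2, (f y).2]
  exact hss' (proj_eq_of_le (ht'.1 hs') hxy)

omit [∀ s, CompactSpace (Y s)] [∀ s, T2Space (Y s)] in
theorem imageSaturated_of_isLUB (hpsys : IsInvSys p) (hpsc : SigmaComplete p)
    (h : ∀ s ∈ M, ∃ s' ∈ M, ImageSaturated f s s') : ImageSaturated f t t := by
  rintro U hU _ ⟨x, hx, rfl⟩ z hz
  obtain ⟨s, hs, U', hU', hxU', hU'U⟩ :=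
    hpsys.exists_preimage_subset_of_isLUB hpsc hMne hMc hMdir ht hU hx
  obtain ⟨s', hs', hss'⟩ := h s hs
  rw [x.2] at hxU'
  obtain ⟨x', hx', rfl⟩ := (hss' U' hU').mono (ht.1 hs') (f x) ⟨x, hxU', rfl⟩ z hz
  exact ⟨x', hU'U (by rwa [mem_preimage, x'.2]), rfl⟩

omit [∀ s, CompactSpace (Y s)] [∀ s, T2Space (Y s)] in
theorem mem_descentIndices_of_isLUB (hpsys : IsInvSys p) (hpsc : SigmaComplete p)
    (hqsc : SigmaComplete q)
    (h : ∀ s ∈ M, ∃ s' ∈ M, CoordFactorsThrough f s s' ∧ (IsOpenMap f → ImageSaturated f s s')) :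
    t ∈ descentIndices f := by
  choose! next hnext hfac hsat using h
  refine ⟨coordFactorsThrough_of_isLUB hMne hMc hMdir ht hqsc fun s hs =>
    ⟨next s, hnext s hs, hfac s hs⟩, fun hfo => ?_⟩
  exact imageSaturated_of_isLUB hMne hMc hMdir ht hpsys hpsc fun s hs =>
    ⟨next s, hnext s hs, hsat s hs hfo⟩

end Closure

omit [∀ s, CompactSpace (Y s)] [∀ s, T2Space (Y s)] in
theorem sigmaClosedIn_descentIndices (hpsys : IsInvSys p) (hpsc : SigmaComplete p)
    (hqsc : SigmaComplete q) : SigmaClosedIn (descentIndices f) :=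
  fun _ hMT hMne hMc hMdir _ ht =>
    mem_descentIndices_of_isLUB hMne hMc hMdir ht hpsys hpsc hqsc fun s hs => ⟨s, hs, hMT hs⟩

theorem exists_mem_descentIndices_ge [∀ s, TopologicalSpace.MetrizableSpace (X s)]
    [∀ s, TopologicalSpace.MetrizableSpace (Y s)] (hpsys : IsInvSys p) (hpsc : SigmaComplete p)
    (hqsys : IsInvSys q) (hqsc : SigmaComplete q) (hf : Continuous f) (s₀ : ι) :
    ∃ t ∈ descentIndices f, s₀ ≤ t := by
  have : Nonempty ι := ⟨s₀⟩
  have := hpsys.isDirected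
  have hstep : ∀ v, ∃ w, v ≤ w ∧ CoordFactorsThrough f v w ∧
      (IsOpenMap f → ImageSaturated f v w) := fun v =>
    ((eventually_ge_atTop v).and <|
      (hpsys.eventually_factorsThrough_proj hpsc ((continuous_proj v).comp hf)).and <|
        eventually_imp_distrib_left.2 <|
          fun hfo => eventually_imageSaturated hpsys hqsys hqsc hf hfo v).exists
  choose next hle hnext using hstep
  -- Close off along the chain `s₀ ≤ next s₀ ≤ next (next s₀) ≤ ⋯` and pass to its supremum.
  have hc : Monotone fun n => next^[n] s₀ := fun m n hmn =>
    Function.monotone_iterate_of_id_le hle hmn s₀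
  obtain ⟨t, ht, -⟩ := hpsc _ (range_nonempty _) (countable_range _) hc.directed_le.directedOn_range
  refine ⟨t, mem_descentIndices_of_isLUB (range_nonempty _) (countable_range _)
    hc.directed_le.directedOn_range ht hpsys hpsc hqsc ?_, ht.1 ⟨0, rfl⟩⟩
  rintro _ ⟨n, rfl⟩
  exact ⟨next^[n + 1] s₀, ⟨n + 1, rfl⟩, by rw [Function.iterate_succ_apply']; exact hnext _⟩

theorem isOpenMap_of_imageSaturated (hpsys : IsInvSys p) (hqsys : IsInvSys q)
    (hfo : IsOpenMap f) {t : ι} {F : X t → Y t} (hF : ∀ x, (f x).1 t = F (x.1 t))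
    (hsat : ImageSaturated f t t) : IsOpenMap F := by
  intro U hU
  have hFU : F '' U =
      (fun y : InvLim q => y.1 t) '' (f '' ((fun x : InvLim p => x.1 t) ⁻¹' U)) := by
    rw [image_image]
    simp only [hF]
    rw [← image_image F (fun x : InvLim p => x.1 t), image_preimage_eq U (hpsys.proj_surjective t)]
  rw [hFU]
  refine (hqsys.isQuotientMap_proj t).isCoinducing.isOpen_preimage.1 ?_
  convert hfo _ (hU.preimage (continuous_proj t)) using 1
  exact Subset.antisymm (fun z ⟨y, hy, hyz⟩ => hsat U hU y hy z hyz.symm)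
    (subset_preimage_image _ _)

end Descent

/-- given σ-complete inverse systems of compact metrizable spaces
`(X_s, p^t_s, Σ)` and `(Y_s, q^t_s, Σ)` with limits `X`, `Y` and a continuous map
`f : X → Y`, there are a σ-closed cofinal `T ⊆ Σ` and continuous maps
`f_t : X_t → Y_t` (`t ∈ T`) with `q_t ∘ f = f_t ∘ p_t`; moreover if `f` is open
then the `f_t` may be chosen open. -/
theorem statement1 {ι : Type*} [PartialOrder ι] {X Y : ι → Type*}
    [∀ s, TopologicalSpace (X s)] [∀ s, CompactSpace (X s)] [∀ s, T2Space (X s)]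
    [∀ s, TopologicalSpace.MetrizableSpace (X s)]
    [∀ s, TopologicalSpace (Y s)] [∀ s, CompactSpace (Y s)] [∀ s, T2Space (Y s)]
    [∀ s, TopologicalSpace.MetrizableSpace (Y s)]
    (p : ∀ ⦃s t : ι⦄, s ≤ t → X t → X s) (q : ∀ ⦃s t : ι⦄, s ≤ t → Y t → Y s)
    (hpsys : IsInvSys p) (hpsc : SigmaComplete p)
    (hqsys : IsInvSys q) (hqsc : SigmaComplete q)
    (f : InvLim p → InvLim q) (hf : Continuous f) :
    ∃ T : Set ι, SigmaClosedIn T ∧ (∀ s : ι, ∃ t ∈ T, s ≤ t) ∧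
      ∃ F : ∀ t ∈ T, X t → Y t,
        (∀ t (ht : t ∈ T), Continuous (F t ht)) ∧
        (∀ t (ht : t ∈ T) (x : InvLim p), (f x).1 t = F t ht (x.1 t)) ∧
        (IsOpenMap f → ∀ t (ht : t ∈ T), IsOpenMap (F t ht)) := by
  let coord (t : ι) : C(InvLim p, Y t) := ⟨fun x => (f x).1 t, (InvLim.continuous_proj t).comp hf⟩
  let F : ∀ t ∈ descentIndices f, C(X t, Y t) := fun t ht =>
    (hpsys.isQuotientMap_proj t).lift (coord t) ht.1
  have hF : ∀ t (ht : t ∈ descentIndices f) (x : InvLim p), (f x).1 t = F t ht (x.1 t) :=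
    fun t ht x =>
      (DFunLike.congr_fun ((hpsys.isQuotientMap_proj t).lift_comp (coord t) ht.1) x).symm
  exact ⟨descentIndices f, sigmaClosedIn_descentIndices hpsys hpsc hqsc,
    exists_mem_descentIndices_ge hpsys hpsc hqsys hqsc hf, fun t ht => F t ht,
    fun t ht => (F t ht).continuous, hF,
    fun hfo t ht => isOpenMap_of_imageSaturated hpsys hqsys hfo (hF t ht) (ht.2 hfo)⟩
end

section
/- (Spectral Theorem for retractions) Let X = lim (X_s, p^t_s, Σ) and Y = lim (Y_s, q^t_s, Σ) with projections p_s : X → X_s, q_s : Y → Y_s, where both inverse systems are σ-complete and all X_s, Y_s are compact metrizable. If f : X → Y is a retraction, then there exist a σ-closed cofinal subset T ⊆ Σ and retractions f_t : X_t → Y_t (t ∈ T) such that q_t ∘ f = f_t ∘ p_t for every t ∈ T. -/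
open Set Filter Topology

/-- A continuous surjection which admits a continuous right inverse. -/
def IsRetraction {X Y : Type*} [TopologicalSpace X] [TopologicalSpace Y]
    (f : X → Y) : Prop :=
  Continuous f ∧ Function.Surjective f ∧ ∃ g : Y → X, Continuous g ∧ f ∘ g = id

set_option linter.unusedSectionVars false

section Aux

variable {ι : Type*} [PartialOrder ι] {X : ι → Type*}
    [∀ s, TopologicalSpace (X s)] [∀ s, CompactSpace (X s)] [∀ s, T2Space (X s)]
    {r : ∀ ⦃s t : ι⦄, s ≤ t → X t → X s}

lemma invLim_compactSpace (hsys : IsInvSys r) : CompactSpace (InvLim r) := by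
  have hc : IsClosed {x : ∀ s, X s | ∀ ⦃s t : ι⦄ (h : s ≤ t), r h (x t) = x s} := by
    have : {x : ∀ s, X s | ∀ ⦃s t : ι⦄ (h : s ≤ t), r h (x t) = x s} =
        ⋂ (s : ι), ⋂ (t : ι), ⋂ (h : s ≤ t), {x : ∀ s, X s | r h (x t) = x s} := by
      ext x; simp only [mem_iInter, mem_setOf_eq]
    rw [this]
    refine isClosed_iInter fun s => isClosed_iInter fun t => isClosed_iInter fun h => ?_
    exact isClosed_eq ((hsys.continuous h).comp (continuous_apply t)) (continuous_apply s)
  exact isCompact_iff_compactSpace.mp hc.isCompact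

lemma invLim_proj_continuous (s : ι) : Continuous (fun x : InvLim r => x.1 s) :=
  (continuous_apply s).comp continuous_subtype_val

lemma nonempty_of_sys (hsys : IsInvSys r) {s : ι} (y : X s) (u : ι) : Nonempty (X u) := by
  obtain ⟨c, hsc, huc⟩ := hsys.directed s u
  obtain ⟨z, -⟩ := hsys.surjective hsc y
  exact ⟨r huc z⟩

/-- Projections from the inverse limit are surjective. -/
lemma invLim_proj_surjective (hsys : IsInvSys r) (s : ι) :
    Function.Surjective (fun x : InvLim r => x.1 s) := by
  intro y
  have hne : ∀ u, Nonempty (X u) := nonempty_of_sys hsys y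
  -- family of approximations indexed by levels above s
  let Z : {t : ι // s ≤ t} → Set (∀ u, X u) := fun t =>
    {x | x s = y ∧ ∀ u v (h1 : u ≤ v) (_ : v ≤ t.1), r h1 (x v) = x u}
  have hmono : ∀ (a b : {t : ι // s ≤ t}), a.1 ≤ b.1 → Z b ⊆ Z a := by
    intro a b hab x hx
    exact ⟨hx.1, fun u v h1 h2 => hx.2 u v h1 (h2.trans hab)⟩
  have hdir : Directed (· ⊇ ·) Z := by
    intro a b
    obtain ⟨c, hac, hbc⟩ := hsys.directed a.1 b.1
    exact ⟨⟨c, a.2.trans hac⟩, hmono a ⟨c, _⟩ hac, hmono b ⟨c, _⟩ hbc⟩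
  have hZne : ∀ t, (Z t).Nonempty := by
    intro t
    obtain ⟨z, hz⟩ := hsys.surjective t.2 y
    classical
    refine ⟨fun u => if h : u ≤ t.1 then r h z else (hne u).some, ?_, ?_⟩
    · simp only [dif_pos t.2]; exact hz
    · intro u v h1 h2
      simp only [dif_pos h2, dif_pos (h1.trans h2)]
      exact hsys.map_comp h1 h2 z
  have hZcl : ∀ t, IsClosed (Z t) := by
    intro t
    have : Z t = {x : ∀ u, X u | x s = y} ∩
        ⋂ (u : ι), ⋂ (v : ι), ⋂ (h1 : u ≤ v), ⋂ (_ : v ≤ t.1),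
          {x : ∀ u, X u | r h1 (x v) = x u} := by
      ext x
      simp only [Z, mem_inter_iff, mem_iInter, mem_setOf_eq]
    rw [this]
    refine (isClosed_eq (continuous_apply s) continuous_const).inter ?_
    refine isClosed_iInter fun u => isClosed_iInter fun v => isClosed_iInter fun h1 =>
      isClosed_iInter fun _ => ?_
    exact isClosed_eq ((hsys.continuous h1).comp (continuous_apply v)) (continuous_apply u)
  have : Nonempty {t : ι // s ≤ t} := ⟨⟨s, le_refl s⟩⟩
  obtain ⟨x, hx⟩ := IsCompact.nonempty_iInter_of_directed_nonempty_isCompact_isClosed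
    Z hdir hZne (fun t => (hZcl t).isCompact) hZcl
  simp only [mem_iInter] at hx
  have hthread : ∀ ⦃u v : ι⦄ (h : u ≤ v), r h (x v) = x u := by
    intro u v h
    obtain ⟨c, hvc, hsc⟩ := hsys.directed v s
    exact (hx ⟨c, hsc⟩).2 u v h hvc
  exact ⟨⟨x, hthread⟩, (hx ⟨s, le_refl s⟩).1⟩

end Aux

section Aux2

variable {ι : Type*} [PartialOrder ι] {X : ι → Type*}
    [∀ s, TopologicalSpace (X s)] [∀ s, CompactSpace (X s)] [∀ s, T2Space (X s)]
    {r : ∀ ⦃s t : ι⦄, s ≤ t → X t → X s}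

/-- Disjoint closed sets in the limit are separated at some level above `s0`. -/
lemma exists_level_separating (hsys : IsInvSys r) {A B : Set (InvLim r)}
    (hA : IsClosed A) (hB : IsClosed B) (hAB : Disjoint A B) (s0 : ι) :
    ∃ t, s0 ≤ t ∧ ∀ a ∈ A, ∀ b ∈ B, (a : InvLim r).1 t ≠ (b : InvLim r).1 t := by
  haveI := invLim_compactSpace hsys
  by_contra hcon
  push_neg at hcon
  let K : {t : ι // s0 ≤ t} → Set (InvLim r × InvLim r) := fun t =>
    (A ×ˢ B) ∩ {ab | ab.1.1 t.1 = ab.2.1 t.1}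
  have hmono : ∀ (a b : {t : ι // s0 ≤ t}), a.1 ≤ b.1 → K b ⊆ K a := by
    rintro a b hab ⟨x, y⟩ ⟨hxy, hco⟩
    refine ⟨hxy, ?_⟩
    simp only [mem_setOf_eq] at hco ⊢
    rw [← x.2 hab, ← y.2 hab, hco]
  have hdir : Directed (· ⊇ ·) K := by
    intro a b
    obtain ⟨c, hac, hbc⟩ := hsys.directed a.1 b.1
    exact ⟨⟨c, a.2.trans hac⟩, hmono a ⟨c, _⟩ hac, hmono b ⟨c, _⟩ hbc⟩
  have hKcl : ∀ t, IsClosed (K t) := by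
    intro t
    refine (hA.prod hB).inter (isClosed_eq ?_ ?_)
    · exact (invLim_proj_continuous t.1).comp continuous_fst
    · exact (invLim_proj_continuous t.1).comp continuous_snd
  have hKne : ∀ t, (K t).Nonempty := by
    intro t
    obtain ⟨a, ha, b, hb, hab⟩ := hcon t.1 t.2
    exact ⟨(a, b), ⟨⟨ha, hb⟩, hab⟩⟩
  haveI : Nonempty {t : ι // s0 ≤ t} := ⟨⟨s0, le_refl s0⟩⟩
  obtain ⟨⟨a, b⟩, hab⟩ := IsCompact.nonempty_iInter_of_directed_nonempty_isCompact_isClosed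
    K hdir hKne (fun t => (hKcl t).isCompact) hKcl
  simp only [mem_iInter] at hab
  have : a = b := by
    apply Subtype.ext; funext u
    obtain ⟨c, huc, hsc⟩ := hsys.directed u s0
    have := (hab ⟨c, hsc⟩).2
    simp only [mem_setOf_eq] at this
    rw [← a.2 huc, ← b.2 huc, this]
  exact absurd ((hab ⟨s0, le_refl s0⟩).1) (by
    rw [this]
    intro h
    exact (hAB.ne_of_mem h.1 h.2) rfl)

/-- Upper bound of a countable set above a given element, using σ-completeness. -/
lemma exists_ub_countable (hsys : IsInvSys r) (hsc : SigmaComplete r)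
    {S : Set ι} (hS : S.Countable) (s0 : ι) :
    ∃ t, s0 ≤ t ∧ ∀ s ∈ S, s ≤ t := by
  obtain ⟨e, he⟩ := (hS.insert s0).exists_eq_range ⟨s0, mem_insert s0 S⟩
  have hstep : ∀ a : ι, ∀ n : ℕ, ∃ c, a ≤ c ∧ e n ≤ c := fun a n => hsys.directed a (e n)
  classical
  let u : ℕ → ι := fun n => Nat.rec s0 (fun m prev => Classical.choose (hstep prev m)) n
  have hu1 : ∀ n, u n ≤ u (n + 1) := fun n => (Classical.choose_spec (hstep (u n) n)).1
  have hu2 : ∀ n, e n ≤ u (n + 1) := fun n => (Classical.choose_spec (hstep (u n) n)).2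
  have humono : Monotone u := monotone_nat_of_le_succ hu1
  have hdirM : DirectedOn (· ≤ ·) (range u) := by
    rintro _ ⟨m, rfl⟩ _ ⟨n, rfl⟩
    exact ⟨u (max m n), mem_range_self _, humono (le_max_left m n), humono (le_max_right m n)⟩
  obtain ⟨t, hlub, -⟩ := hsc (range u) ⟨u 0, mem_range_self 0⟩ (countable_range u) hdirM
  have hub : ∀ n, u n ≤ t := fun n => hlub.1 (mem_range_self n)
  refine ⟨t, hub 0, fun s hs => ?_⟩
  have : s ∈ range e := he ▸ mem_insert_of_mem s0 hs
  obtain ⟨n, rfl⟩ := this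
  exact (hu2 n).trans (hub (n + 1))

end Aux2

section Aux3

variable {ι : Type*} [PartialOrder ι] {X : ι → Type*}
    [∀ s, TopologicalSpace (X s)] [∀ s, CompactSpace (X s)] [∀ s, T2Space (X s)]
    {r : ∀ ⦃s t : ι⦄, s ≤ t → X t → X s}

/-- A continuous map from the limit of a σ-complete system to a compact metrizable
space factors through some level above any given `s0`. -/
lemma exists_factor_level (hsys : IsInvSys r) (hsc : SigmaComplete r)
    {M : Type*} [TopologicalSpace M] [CompactSpace M] [T2Space M]
    [TopologicalSpace.MetrizableSpace M]
    {φ : InvLim r → M} (hφ : Continuous φ) (s0 : ι) :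
    ∃ t, s0 ≤ t ∧ ∀ x x' : InvLim r, x.1 t = x'.1 t → φ x = φ x' := by
  haveI := invLim_compactSpace hsys
  letI : MetricSpace M := TopologicalSpace.metrizableSpaceMetric M
  obtain ⟨b, hbc, -, hb⟩ := TopologicalSpace.exists_countable_basis M
  classical
  -- pairs of basis elements with disjoint closures
  let P : Set (Set M × Set M) := (b ×ˢ b) ∩ {UV | Disjoint (closure UV.1) (closure UV.2)}
  have hPc : P.Countable := (hbc.prod hbc).mono inter_subset_left
  have hsep : ∀ UV ∈ P, ∃ t : ι, ∀ a ∈ φ ⁻¹' (closure UV.1), ∀ b' ∈ φ ⁻¹' (closure UV.2),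
      (a : InvLim r).1 t ≠ (b' : InvLim r).1 t := by
    rintro ⟨U, V⟩ hUV
    have hd : Disjoint (φ ⁻¹' (closure U)) (φ ⁻¹' (closure V)) :=
      (hUV.2 : Disjoint (closure U) (closure V)).preimage φ
    obtain ⟨t, -, ht⟩ := exists_level_separating hsys
      (isClosed_closure.preimage hφ) (isClosed_closure.preimage hφ) hd s0
    exact ⟨t, ht⟩
  let τ : ∀ UV ∈ P, ι := fun UV hUV => Classical.choose (hsep UV hUV)
  have hτ : ∀ UV (hUV : UV ∈ P), ∀ a ∈ φ ⁻¹' (closure UV.1), ∀ b' ∈ φ ⁻¹' (closure UV.2),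
      (a : InvLim r).1 (τ UV hUV) ≠ (b' : InvLim r).1 (τ UV hUV) :=
    fun UV hUV => Classical.choose_spec (hsep UV hUV)
  -- the set of all separating levels is countable
  let S : Set ι := ⋃ (UV : Set M × Set M) (hUV : UV ∈ P), {τ UV hUV}
  have hSc : S.Countable := by
    refine Countable.biUnion hPc fun UV hUV => countable_singleton _
  obtain ⟨t, hst, hub⟩ := exists_ub_countable hsys hsc hSc s0
  refine ⟨t, hst, fun x x' hxx' => ?_⟩
  by_contra hne
  -- separate φ x and φ x' by basis elements with disjoint closures
  obtain ⟨W, W', hW, hW', hxW, hxW', hWW'⟩ := t2_separation hne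
  obtain ⟨C, hC, hCcl, hCW⟩ := exists_mem_nhds_isClosed_subset (hW.mem_nhds hxW)
  obtain ⟨U, hUb, hxU, hUC⟩ := hb.mem_nhds_iff.mp hC
  obtain ⟨C', hC', hCcl', hCW'⟩ := exists_mem_nhds_isClosed_subset (hW'.mem_nhds hxW')
  obtain ⟨V, hVb, hxV, hVC⟩ := hb.mem_nhds_iff.mp hC'
  have hUVmem : (U, V) ∈ P := by
    refine ⟨⟨hUb, hVb⟩, ?_⟩
    have h1 : closure U ⊆ W := (closure_minimal hUC hCcl).trans hCW
    have h2 : closure V ⊆ W' := (closure_minimal hVC hCcl').trans hCW'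
    exact Disjoint.mono h1 h2 hWW'
  have hmem : τ (U, V) hUVmem ∈ S := mem_iUnion₂.mpr ⟨(U, V), hUVmem, rfl⟩
  have hle : τ (U, V) hUVmem ≤ t := hub _ hmem
  have hxA : x ∈ φ ⁻¹' (closure U) := subset_closure hxU
  have hxB : x' ∈ φ ⁻¹' (closure V) := subset_closure hxV
  have := hτ (U, V) hUVmem x hxA x' hxB
  apply this
  rw [← x.2 hle, ← x'.2 hle, hxx']

end Aux3

/-- Spectral Theorem for retractions: given σ-complete inverse systems
of compact metrizable spaces with limits `X`, `Y`, if `f : X → Y` is a retraction,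
then there are a σ-closed cofinal `T ⊆ Σ` and retractions `f_t : X_t → Y_t` (`t ∈ T`)
with `q_t ∘ f = f_t ∘ p_t` for all `t ∈ T`. -/
theorem statement2 {ι : Type*} [PartialOrder ι] {X Y : ι → Type*}
    [∀ s, TopologicalSpace (X s)] [∀ s, CompactSpace (X s)] [∀ s, T2Space (X s)]
    [∀ s, TopologicalSpace.MetrizableSpace (X s)]
    [∀ s, TopologicalSpace (Y s)] [∀ s, CompactSpace (Y s)] [∀ s, T2Space (Y s)]
    [∀ s, TopologicalSpace.MetrizableSpace (Y s)]
    (p : ∀ ⦃s t : ι⦄, s ≤ t → X t → X s) (q : ∀ ⦃s t : ι⦄, s ≤ t → Y t → Y s)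
    (hpsys : IsInvSys p) (hpsc : SigmaComplete p)
    (hqsys : IsInvSys q) (hqsc : SigmaComplete q)
    (f : InvLim p → InvLim q) (hf : IsRetraction f) :
    ∃ T : Set ι, SigmaClosedIn T ∧ (∀ s : ι, ∃ t ∈ T, s ≤ t) ∧
      ∃ F : ∀ t ∈ T, X t → Y t,
        (∀ t (ht : t ∈ T), IsRetraction (F t ht)) ∧
        (∀ t (ht : t ∈ T) (x : InvLim p), (f x).1 t = F t ht (x.1 t)) := by
  classical
  obtain ⟨hfc, hfs, g, hgc, hfg⟩ := hf
  haveI hXc := invLim_compactSpace hpsys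
  haveI hYc := invLim_compactSpace hqsys
  set T : Set ι := {s | (∀ x x' : InvLim p, x.1 s = x'.1 s → (f x).1 s = (f x').1 s) ∧
      (∀ y y' : InvLim q, y.1 s = y'.1 s → (g y).1 s = (g y').1 s)} with hT
  refine ⟨T, ?_, ?_, ?_⟩
  · -- σ-closed
    intro M hMT hMne hMc hMdir t ht
    obtain ⟨t1, hlub1, inj1⟩ := hpsc M hMne hMc hMdir
    obtain rfl : t1 = t := hlub1.unique ht
    obtain ⟨t2, hlub2, inj2⟩ := hqsc M hMne hMc hMdir
    obtain rfl : t2 = t1 := hlub2.unique ht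
    constructor
    · intro x x' hxx'
      apply inj2
      intro s hs
      rw [(f x).2 (hlub2.1 hs), (f x').2 (hlub2.1 hs)]
      refine (hMT hs).1 x x' ?_
      rw [← x.2 (ht.1 hs), ← x'.2 (ht.1 hs), hxx']
    · intro y y' hyy'
      apply inj1
      intro s hs
      rw [(g y).2 (hlub1.1 hs), (g y').2 (hlub1.1 hs)]
      refine (hMT hs).2 y y' ?_
      rw [← y.2 (ht.1 hs), ← y'.2 (ht.1 hs), hyy']
  · -- cofinal
    intro s
    have hstep : ∀ a : ι, ∃ b, a ≤ b ∧
        (∀ x x' : InvLim p, x.1 b = x'.1 b → (f x).1 a = (f x').1 a) ∧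
        (∀ y y' : InvLim q, y.1 b = y'.1 b → (g y).1 a = (g y').1 a) := by
      intro a
      obtain ⟨b1, hab1, hb1⟩ := exists_factor_level hpsys hpsc
        ((invLim_proj_continuous a).comp hfc) a
      obtain ⟨b2, hab2, hb2⟩ := exists_factor_level hqsys hqsc
        ((invLim_proj_continuous a).comp hgc) a
      obtain ⟨c, hb1c, hb2c⟩ := hpsys.directed b1 b2
      refine ⟨c, hab1.trans hb1c, fun x x' h => hb1 x x' ?_, fun y y' h => hb2 y y' ?_⟩
      · rw [← x.2 hb1c, ← x'.2 hb1c, h]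
      · rw [← y.2 hb2c, ← y'.2 hb2c, h]
    let u : ℕ → ι := fun n => Nat.rec s (fun _ prev => Classical.choose (hstep prev)) n
    have hu1 : ∀ n, u n ≤ u (n + 1) := fun n => (Classical.choose_spec (hstep (u n))).1
    have huf : ∀ n, ∀ x x' : InvLim p, x.1 (u (n + 1)) = x'.1 (u (n + 1)) →
        (f x).1 (u n) = (f x').1 (u n) := fun n => (Classical.choose_spec (hstep (u n))).2.1
    have hug : ∀ n, ∀ y y' : InvLim q, y.1 (u (n + 1)) = y'.1 (u (n + 1)) →
        (g y).1 (u n) = (g y').1 (u n) := fun n => (Classical.choose_spec (hstep (u n))).2.2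
    have humono : Monotone u := monotone_nat_of_le_succ hu1
    have hdirM : DirectedOn (· ≤ ·) (range u) := by
      rintro _ ⟨m, rfl⟩ _ ⟨n, rfl⟩
      exact ⟨u (max m n), mem_range_self _, humono (le_max_left m n), humono (le_max_right m n)⟩
    obtain ⟨c, hlubp, injp⟩ := hpsc (range u) ⟨u 0, mem_range_self 0⟩ (countable_range u) hdirM
    obtain ⟨c2, hlubq, injq⟩ := hqsc (range u) ⟨u 0, mem_range_self 0⟩ (countable_range u) hdirM
    obtain rfl : c2 = c := hlubq.unique hlubp
    refine ⟨c2, ⟨?_, ?_⟩, hlubp.1 (mem_range_self 0)⟩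
    · intro x x' hxx'
      apply injq
      rintro _ ⟨n, rfl⟩
      rw [(f x).2 (hlubq.1 (mem_range_self n)), (f x').2 (hlubq.1 (mem_range_self n))]
      refine huf n x x' ?_
      rw [← x.2 (hlubp.1 (mem_range_self (n + 1))), ← x'.2 (hlubp.1 (mem_range_self (n + 1))),
        hxx']
    · intro y y' hyy'
      apply injp
      rintro _ ⟨n, rfl⟩
      rw [(g y).2 (hlubp.1 (mem_range_self n)), (g y').2 (hlubp.1 (mem_range_self n))]
      refine hug n y y' ?_
      rw [← y.2 (hlubq.1 (mem_range_self (n + 1))), ← y'.2 (hlubq.1 (mem_range_self (n + 1))),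
        hyy']
  · -- the induced retractions
    have hpsurj : ∀ t : ι, Function.Surjective (fun x : InvLim p => x.1 t) :=
      invLim_proj_surjective hpsys
    have hqsurj : ∀ t : ι, Function.Surjective (fun y : InvLim q => y.1 t) :=
      invLim_proj_surjective hqsys
    refine ⟨fun t ht a => (f (hpsurj t a).choose).1 t, ?_, ?_⟩
    swap
    · -- commutation
      intro t ht x
      exact ht.1 x (hpsurj t (x.1 t)).choose ((hpsurj t (x.1 t)).choose_spec).symm
    intro t ht
    have hcomm : ∀ x : InvLim p, (f x).1 t = (f (hpsurj t (x.1 t)).choose).1 t :=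
      fun x => ht.1 x (hpsurj t (x.1 t)).choose ((hpsurj t (x.1 t)).choose_spec).symm
    have hqmap : IsQuotientMap (fun x : InvLim p => x.1 t) :=
      ((invLim_proj_continuous t).isClosedMap).isQuotientMap (invLim_proj_continuous t)
        (hpsurj t)
    have hqmapq : IsQuotientMap (fun y : InvLim q => y.1 t) :=
      ((invLim_proj_continuous t).isClosedMap).isQuotientMap (invLim_proj_continuous t)
        (hqsurj t)
    refine ⟨?_, ?_, ?_⟩
    · -- continuity of F
      rw [hqmap.continuous_iff]
      have : (fun a => (f (hpsurj t a).choose).1 t) ∘ (fun x : InvLim p => x.1 t) =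
          fun x : InvLim p => (f x).1 t := by
        funext x; exact (hcomm x).symm
      rw [this]
      exact (invLim_proj_continuous t).comp hfc
    · -- surjectivity of F
      intro b
      obtain ⟨y, hy⟩ := hqsurj t b
      obtain ⟨x, rfl⟩ := hfs y
      exact ⟨x.1 t, (hcomm x).symm.trans hy⟩
    · -- the section
      have hGcomm : ∀ y : InvLim q, (g y).1 t = (g (hqsurj t (y.1 t)).choose).1 t :=
        fun y => ht.2 y (hqsurj t (y.1 t)).choose ((hqsurj t (y.1 t)).choose_spec).symm
      refine ⟨fun b => (g (hqsurj t b).choose).1 t, ?_, ?_⟩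
      · rw [hqmapq.continuous_iff]
        have : (fun b => (g (hqsurj t b).choose).1 t) ∘ (fun y : InvLim q => y.1 t) =
            fun y : InvLim q => (g y).1 t := by
          funext y; exact (hGcomm y).symm
        rw [this]
        exact (invLim_proj_continuous t).comp hgc
      · funext b
        simp only [Function.comp_apply, id_eq]
        rw [← hcomm (g (hqsurj t b).choose)]
        have hfgy : f (g (hqsurj t b).choose) = (hqsurj t b).choose := congrFun hfg _
        rw [hfgy]
        exact (hqsurj t b).choose_spec
end

section
/- If X is a Valdivia compact space, then there exist a set S of cardinality at most the weight w(X) of X and a Valdivia embedding h : X → [0,1]^S. -/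
/-! Restricting a Valdivia embedding `h : X → [0,1]^T` to a set `S ⊆ T` of coordinates keeps the
range equal to the closure of its `Σ`-part, because the projection is continuous and maps `Σ(T)`
into `Σ(S)`; and it remains an embedding as soon as the coordinates in `S` separate points.
For infinite `X` take a base `B` with `|B| = w(X)`. Two basic sets with disjoint closures have
disjoint compact images, which finitely many coordinates already separate; by regularity these
`|B × B| · ℵ₀ = |B|` coordinates separate points. A finite `X` is discrete, and its indicator
functions embed it into `[0,1]^X`, where `|X| ≤ w(X)` because every base contains all singletons. -/

open Set Filter Topology

universe u

/-- `Σ(T)`: the points of the Tikhonov cube `[0,1]^T` with countable support. -/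
def SigmaProd (T : Type*) : Set (T → unitInterval) :=
  {x | {t | x t ≠ 0}.Countable}

/-- A Valdivia embedding: a topological embedding `h : X → [0,1]^T` such that
`h(X)` is the closure of `h(X) ∩ Σ(T)`. -/
def IsValdiviaEmbedding {X : Type*} [TopologicalSpace X] {T : Type*}
    (h : X → T → unitInterval) : Prop :=
  Topology.IsEmbedding h ∧ Set.range h = closure (Set.range h ∩ SigmaProd T)

/-- A space is Valdivia compact if it admits a Valdivia embedding into some cube. -/
def IsValdivia (X : Type u) [TopologicalSpace X] : Prop :=
  ∃ (T : Type u) (h : X → T → unitInterval), IsValdiviaEmbedding h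

/-- The weight of a topological space: the least cardinality of a base. -/
noncomputable def tweight (X : Type u) [TopologicalSpace X] : Cardinal.{u} :=
  sInf {c | ∃ B : Set (Set X), TopologicalSpace.IsTopologicalBasis B ∧ Cardinal.mk ↥B = c}

open Cardinal TopologicalSpace

lemma Cardinal.mk_iUnion_le_mul_aleph0 {α ι : Type u} (f : ι → Set α) (hf : ∀ i, (f i).Finite) :
    #(⋃ i, f i) ≤ #ι * ℵ₀ :=
  (mk_iUnion_le f).trans (mul_le_mul_right (ciSup_le' fun i => (hf i).lt_aleph0.le) _)

theorem IsCompact.exists_finset_coord_ne_of_disjoint {ι : Type*} {Y : ι → Type*}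
    [∀ i, TopologicalSpace (Y i)] [∀ i, T2Space (Y i)] {K L : Set (∀ i, Y i)}
    (hK : IsCompact K) (hL : IsCompact L) (hKL : Disjoint K L) :
    ∃ F : Finset ι, ∀ a ∈ K, ∀ b ∈ L, ∃ i ∈ F, a i ≠ b i := by
  let W : ι → Set ((∀ i, Y i) × (∀ i, Y i)) := fun i => {p | p.1 i ≠ p.2 i}
  have hW : ∀ i, IsOpen (W i) := fun i =>
    isOpen_ne_fun ((continuous_apply i).comp continuous_fst)
      ((continuous_apply i).comp continuous_snd)
  have hcover : K ×ˢ L ⊆ ⋃ i, W i := fun p hp =>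
    mem_iUnion.2 (Function.ne_iff.1 (hKL.ne_of_mem hp.1 hp.2))
  obtain ⟨F, hF⟩ := (hK.prod hL).elim_finite_subcover W hW hcover
  exact ⟨F, fun a ha b hb => by simpa [W] using hF (mk_mem_prod ha hb)⟩

namespace TopologicalSpace.IsTopologicalBasis

variable {X : Type u} [TopologicalSpace X] {B : Set (Set X)}

lemma injective_setOf_mem [T0Space X] (hB : IsTopologicalBasis B) :
    Function.Injective fun x : X => {b : B | x ∈ (b : Set X)} := by
  intro x y hxy
  refine Inseparable.eq (hB.nhds_hasBasis.eq_of_same_basis (hB.nhds_hasBasis.congr ?_ ?_))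
  · exact fun b => and_congr_right fun hb => (Set.ext_iff.1 hxy ⟨b, hb⟩).symm
  · exact fun _ _ => rfl

lemma aleph0_le_mk [T0Space X] [Infinite X] (hB : IsTopologicalBasis B) : ℵ₀ ≤ #B := by
  by_contra! hfin
  have : Finite B := lt_aleph0_iff_finite.1 hfin
  have : Finite X := Finite.of_injective _ hB.injective_setOf_mem
  exact not_finite X

lemma mk_le [DiscreteTopology X] (hB : IsTopologicalBasis B) : #X ≤ #B := by
  have hsingleton : ∀ x : X, {x} ∈ B := fun x => by
    obtain ⟨b, hb, hxb, hbx⟩ := hB.exists_subset_of_mem_open (mem_singleton x) (isOpen_discrete _)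
    rwa [Subset.antisymm hbx (singleton_subset_iff.2 hxb)] at hb
  exact mk_le_of_injective (f := fun x => (⟨{x}, hsingleton x⟩ : B))
    fun x y hxy => singleton_injective (congrArg Subtype.val hxy)

lemma exists_disjoint_closure [T3Space X] (hB : IsTopologicalBasis B) {x y : X} (hxy : x ≠ y) :
    ∃ U ∈ B, ∃ V ∈ B, x ∈ U ∧ y ∈ V ∧ Disjoint (closure U) (closure V) := by
  obtain ⟨U, ⟨hU, hxU⟩, V, ⟨hV, hyV⟩, hUV⟩ :=
    (hB.nhds_hasBasis.nhds_closure.disjoint_iff hB.nhds_hasBasis.nhds_closure).1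
      (disjoint_nhds_nhds.2 hxy)
  exact ⟨U, hU, V, hV, hxU, hyV, hUV⟩

end TopologicalSpace.IsTopologicalBasis

lemma exists_isTopologicalBasis_mk_eq_tweight (X : Type u) [TopologicalSpace X] :
    ∃ B : Set (Set X), IsTopologicalBasis B ∧ #B = tweight X :=
  csInf_mem (⟨_, _, isTopologicalBasis_opens, rfl⟩ :
    {c | ∃ B : Set (Set X), IsTopologicalBasis B ∧ #B = c}.Nonempty)

lemma mk_le_tweight (X : Type u) [TopologicalSpace X] [DiscreteTopology X] : #X ≤ tweight X := by
  obtain ⟨B, hB, hBw⟩ := exists_isTopologicalBasis_mk_eq_tweight X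
  exact hBw ▸ hB.mk_le

lemma sigmaProd_eq_univ (T : Type*) [Countable T] : SigmaProd T = Set.univ :=
  eq_univ_of_forall fun _ => to_countable _

lemma domRestrict_mem_sigmaProd {T : Type*} (S : Set T) {f : T → unitInterval}
    (hf : f ∈ SigmaProd T) : S.domRestrict f ∈ SigmaProd S :=
  hf.preimage Subtype.coe_injective

section

variable {X : Type*} [TopologicalSpace X] [CompactSpace X] {T : Type*} {h : X → T → unitInterval}

lemma isValdiviaEmbedding_of_countable [Countable T] (hc : Continuous h)
    (hinj : Function.Injective h) : IsValdiviaEmbedding h := by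
  refine ⟨(hc.isClosedEmbedding hinj).isEmbedding, ?_⟩
  rw [sigmaProd_eq_univ, inter_univ, (isCompact_range hc).isClosed.closure_eq]

lemma IsValdiviaEmbedding.restrict (hh : IsValdiviaEmbedding h) (S : Set T)
    (hS : Function.Injective fun x => S.domRestrict (h x)) :
    IsValdiviaEmbedding fun x => S.domRestrict (h x) := by
  obtain ⟨hemb, hrange⟩ := hh
  let π : (T → unitInterval) → (S → unitInterval) := S.domRestrict
  have hπ : Continuous π := continuous_pi fun s => continuous_apply _
  have hc : Continuous (π ∘ h) := hπ.comp hemb.continuous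
  refine ⟨(hc.isClosedEmbedding hS).isEmbedding, ?_⟩
  refine Subset.antisymm ?_ (closure_minimal inter_subset_left (isCompact_range hc).isClosed)
  calc range (π ∘ h) = π '' closure (range h ∩ SigmaProd T) := by rw [range_comp, ← hrange]
    _ ⊆ closure (π '' (range h ∩ SigmaProd T)) := image_closure_subset_closure_image hπ
    _ ⊆ closure (range (π ∘ h) ∩ SigmaProd S) := by
      refine closure_mono ?_
      rintro _ ⟨_, ⟨⟨x, rfl⟩, hx⟩, rfl⟩
      exact ⟨⟨x, rfl⟩, domRestrict_mem_sigmaProd S hx⟩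

end

lemma exists_valdiviaEmbedding_of_finite (X : Type u) [TopologicalSpace X] [T1Space X]
    [Finite X] : ∃ (S : Type u) (h : X → S → unitInterval),
      #S ≤ tweight X ∧ IsValdiviaEmbedding h := by
  classical
  refine ⟨X, fun x s => if x = s then 1 else 0, mk_le_tweight X,
    isValdiviaEmbedding_of_countable continuous_of_discreteTopology fun x y hxy => ?_⟩
  simpa using congrFun hxy y

theorem exists_separating_coords_mk_le {X T : Type u} [TopologicalSpace X] [CompactSpace X]
    [T2Space X] {h : X → T → unitInterval} (hc : Continuous h) (hinj : Function.Injective h)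
    {B : Set (Set X)} (hB : IsTopologicalBasis B) (hBinf : ℵ₀ ≤ #B) :
    ∃ S : Set T, #S ≤ #B ∧ Function.Injective fun x => S.domRestrict (h x) := by
  have hsep : ∀ p : B × B, ∃ F : Finset T, Disjoint (closure p.1.1) (closure p.2.1) →
      ∀ x ∈ closure p.1.1, ∀ y ∈ closure p.2.1, ∃ t ∈ F, h x t ≠ h y t := by
    intro p
    by_cases hp : Disjoint (closure p.1.1) (closure p.2.1)
    · obtain ⟨F, hF⟩ := (isClosed_closure.isCompact.image hc).exists_finset_coord_ne_of_disjoint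
        (isClosed_closure.isCompact.image hc) ((disjoint_image_iff hinj).2 hp)
      exact ⟨F, fun _ x hx y hy => hF _ (mem_image_of_mem h hx) _ (mem_image_of_mem h hy)⟩
    · exact ⟨∅, fun hp' => absurd hp' hp⟩
  choose F hF using hsep
  refine ⟨⋃ p, F p, ?_, fun x y hxy => by_contra fun hne => ?_⟩
  · calc #(⋃ p, (F p : Set T)) ≤ #(B × B) * ℵ₀ :=
          mk_iUnion_le_mul_aleph0 _ fun p => (F p).finite_toSet
      _ = #B := by rw [mk_prod, lift_id, mul_eq_self hBinf, mul_aleph0_eq hBinf]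
  · obtain ⟨U, hU, V, hV, hxU, hyV, hUV⟩ := hB.exists_disjoint_closure hne
    obtain ⟨t, ht, hxyt⟩ :=
      hF (⟨U, hU⟩, ⟨V, hV⟩) hUV x (subset_closure hxU) y (subset_closure hyV)
    exact hxyt (congrFun hxy ⟨t, mem_iUnion.2 ⟨_, ht⟩⟩)

/-- every Valdivia compact space `X` admits a Valdivia embedding into a
cube `[0,1]^S` with `|S| ≤ w(X)`. -/
theorem statement3 {X : Type u} [TopologicalSpace X] [CompactSpace X] [T2Space X]
    (hX : IsValdivia X) :
    ∃ (S : Type u) (h : X → S → unitInterval),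
      Cardinal.mk S ≤ tweight X ∧ IsValdiviaEmbedding h := by
  obtain ⟨T, h, hh⟩ := hX
  cases finite_or_infinite X
  · exact exists_valdiviaEmbedding_of_finite X
  · obtain ⟨B, hB, hBw⟩ := exists_isTopologicalBasis_mk_eq_tweight X
    obtain ⟨S, hSB, hS⟩ :=
      exists_separating_coords_mk_le hh.1.continuous hh.1.injective hB hB.aleph0_le_mk
    exact ⟨S, _, hBw ▸ hSB, hh.restrict S hS⟩
end

section
/- Let X = lim S with projections p_s : X → X_s, where S = (X_s, r^t_s, Σ) is an inverse system of compact Hausdorff spaces with a right inverse (i^t_s). Then there exist uniquely determined continuous embeddings i_s : X_s → X such that p_s ∘ i_s = id_{X_s} and i_t ∘ i^t_s = i_s for all s ≤ t in Σ. Moreover, setting R_s = i_s ∘ p_s : X → X, one has: (1) if s ≤ t then R_s ∘ R_t = R_s = R_t ∘ R_s; and (2) for every x ∈ X the net (R_s(x))_{s∈Σ} converges to x. -/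
open Set Filter Topology

universe u

/-- A right inverse of an inverse system: continuous maps `i^t_s : X s → X t` with
`i^s_s = id`, `r^t_s ∘ i^t_s = id` and `i^u_t ∘ i^t_s = i^u_s`. -/
structure IsRightInverse {ι : Type*} [PartialOrder ι] {X : ι → Type*}
    [∀ s, TopologicalSpace (X s)]
    (r : ∀ ⦃s t : ι⦄, s ≤ t → X t → X s)
    (i : ∀ ⦃s t : ι⦄, s ≤ t → X s → X t) : Prop where
  continuous : ∀ ⦃s t : ι⦄ (h : s ≤ t), Continuous (i h)
  map_id : ∀ (s : ι) (x : X s), i (le_refl s) x = x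
  retr : ∀ ⦃s t : ι⦄ (h : s ≤ t) (x : X s), r h (i h x) = x
  map_comp : ∀ ⦃s t u : ι⦄ (h₁ : s ≤ t) (h₂ : t ≤ u) (x : X s),
    i h₂ (i h₁ x) = i (h₁.trans h₂) x

section Aux

variable {ι : Type*} [PartialOrder ι] {X : ι → Type u} [∀ s, TopologicalSpace (X s)]
  {r : ∀ ⦃s t : ι⦄, s ≤ t → X t → X s} {i : ∀ ⦃s t : ι⦄, s ≤ t → X s → X t}

theorem indep_aux (hsys : IsInvSys r) (hri : IsRightInverse r i)
    {s u c c' : ι} (hsc : s ≤ c) (huc : u ≤ c) (hsc' : s ≤ c') (huc' : u ≤ c')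
    (x : X s) : r huc (i hsc x) = r huc' (i hsc' x) := by
  obtain ⟨d, hcd, hc'd⟩ := hsys.directed c c'
  have key : ∀ {e : ι} (hse : s ≤ e) (hue : u ≤ e) (hed : e ≤ d),
      r hue (i hse x) = r (hue.trans hed) (i (hse.trans hed) x) := by
    intro e hse hue hed
    calc r hue (i hse x) = r hue (r hed (i hed (i hse x))) := by rw [hri.retr]
      _ = r (hue.trans hed) (i hed (i hse x)) := hsys.map_comp hue hed _
      _ = r (hue.trans hed) (i (hse.trans hed) x) := by rw [hri.map_comp]
  rw [key hsc huc hcd, key hsc' huc' hc'd]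

noncomputable def emb (hsys : IsInvSys r) (hri : IsRightInverse r i) (s : ι)
    (x : X s) : InvLim r :=
  ⟨fun u => r (hsys.directed s u).choose_spec.2 (i (hsys.directed s u).choose_spec.1 x),
    by
      intro u v huv
      rw [hsys.map_comp]
      exact indep_aux hsys hri _ _ _ _ x⟩

theorem emb_coord (hsys : IsInvSys r) (hri : IsRightInverse r i)
    {s u c : ι} (hsc : s ≤ c) (huc : u ≤ c) (x : X s) :
    (emb hsys hri s x).1 u = r huc (i hsc x) :=
  indep_aux hsys hri _ _ hsc huc x

theorem emb_self (hsys : IsInvSys r) (hri : IsRightInverse r i)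
    (s : ι) (x : X s) : (emb hsys hri s x).1 s = x := by
  rw [emb_coord hsys hri le_rfl le_rfl, hri.map_id, hsys.map_id]

theorem emb_compat (hsys : IsInvSys r) (hri : IsRightInverse r i)
    {s t : ι} (h : s ≤ t) (x : X s) :
    emb hsys hri t (i h x) = emb hsys hri s x := by
  ext u
  obtain ⟨c, htc, huc⟩ := hsys.directed t u
  rw [emb_coord hsys hri htc huc, emb_coord hsys hri (h.trans htc) huc,
    hri.map_comp]

end Aux

/-- for an inverse system of compact Hausdorff spaces with a right
inverse `(i^t_s)`, there are uniquely determined continuous embeddings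
`I s : X s → X = lim S` with `p_s ∘ I s = id` and `I t ∘ i^t_s = I s`; moreover the
retractions `R_s = I s ∘ p_s` satisfy `R_s ∘ R_t = R_s = R_t ∘ R_s` for `s ≤ t` and
the net `(R_s x)_{s ∈ ι}` converges to `x` for every `x`. -/

theorem statement7 {ι : Type*} [PartialOrder ι] {X : ι → Type u}
    [∀ s, TopologicalSpace (X s)] [∀ s, CompactSpace (X s)] [∀ s, T2Space (X s)]
    (r : ∀ ⦃s t : ι⦄, s ≤ t → X t → X s)
    (i : ∀ ⦃s t : ι⦄, s ≤ t → X s → X t)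
    (hsys : IsInvSys r) (hri : IsRightInverse r i) :
    ∃ I : ∀ s : ι, X s → InvLim r,
      (∀ s : ι, Topology.IsEmbedding (I s)) ∧
      (∀ (s : ι) (x : X s), (I s x).1 s = x) ∧
      (∀ ⦃s t : ι⦄ (h : s ≤ t) (x : X s), I t (i h x) = I s x) ∧
      (∀ J : ∀ s : ι, X s → InvLim r,
        (∀ (s : ι) (x : X s), (J s x).1 s = x) →
        (∀ ⦃s t : ι⦄ (h : s ≤ t) (x : X s), J t (i h x) = J s x) → J = I) ∧
      (∀ ⦃s t : ι⦄ (_ : s ≤ t) (x : InvLim r),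
        I s ((I t (x.1 t)).1 s) = I s (x.1 s) ∧
        I t ((I s (x.1 s)).1 t) = I s (x.1 s)) ∧
      (∀ x : InvLim r,
        Filter.Tendsto (fun s : ι => I s (x.1 s)) Filter.atTop (nhds x)) := by
  refine ⟨emb hsys hri, ?_, emb_self hsys hri, @emb_compat _ _ _ _ _ _ hsys hri, ?_, ?_, ?_⟩
  · intro s
    have hcont : Continuous (emb hsys hri s) := by
      apply Continuous.subtype_mk
      exact continuous_pi fun u => (hsys.continuous _).comp (hri.continuous _)
    have hproj : Continuous (fun y : InvLim r => y.1 s) :=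
      (continuous_apply s).comp continuous_subtype_val
    refine Topology.IsEmbedding.of_comp hcont hproj ?_
    have : (fun y : InvLim r => y.1 s) ∘ emb hsys hri s = id := by
      funext x; exact emb_self hsys hri s x
    rw [this]; exact Topology.IsEmbedding.id
  · intro J hJ1 hJ2
    funext s x
    ext u
    obtain ⟨c, hsc, huc⟩ := hsys.directed s u
    rw [emb_coord hsys hri hsc huc, ← hJ2 hsc x, ← (J c (i hsc x)).2 huc, hJ1]
  · intro s t h x
    constructor
    · congr 1
      rw [emb_coord hsys hri le_rfl h, hri.map_id, x.2 h]
    · have h1 : emb hsys hri s (x.1 s) = emb hsys hri t (i h (x.1 s)) :=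
        (emb_compat hsys hri h _).symm
      rw [h1, emb_self hsys hri]
  · intro x
    rw [tendsto_subtype_rng, tendsto_pi_nhds]
    intro u
    refine Tendsto.congr' ?_ tendsto_const_nhds
    filter_upwards [Filter.mem_atTop u] with s hs
    rw [emb_coord hsys hri le_rfl hs, hri.map_id, x.2 hs]
end
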